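/- arXiv:2002.08359 — 2 statements merged into one kernel-verified Lean document; each statement's English description precedes it below -/
import Mathlib

section
/- If P is a separable Banach space and 2 ≤ κ ≤ 2^ℵ₀ is a cardinal, then there exist a Bernstein set B ⊆ P and a set T ⊆ P of cardinality κ such that {t + B : t ∈ T} is a partition of P. -/
/-- A Cantor set in a topological space: nonempty, compact, totally disconnected, perfect. -/
def IsCantorSet {P : Type*} [TopologicalSpace P] (C : Set P) : Prop :=
  C.Nonempty ∧ IsCompact C ∧ IsTotallyDisconnected C ∧ Perfect C

/-- A Bernstein set: no Cantor set is contained in it or in its complement. -/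
def IsBernstein {P : Type*} [TopologicalSpace P] (B : Set P) : Prop :=
  ∀ C : Set P, IsCantorSet C → ¬C ⊆ B ∧ ¬C ⊆ Bᶜ

/-!
View `P` as a `ℚ`-vector space. It has at most `𝔠` closed sets, and every Cantor set (as well as
`P` itself) is a closed set with at least `𝔠` points. Given a `ℚ`-vector space `Q` with `#Q ≤ 𝔠`, a
transfinite recursion of length `𝔠` therefore picks, for each such closed set `C` and each
`q ∈ Q`, a point of `C` outside the span of all earlier choices. The chosen points are linearly
independent, so some additive `φ : P → Q` sends the point chosen for `(C, q)` to `q`: `φ` maps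
every Cantor set onto `Q`. Consequently, if the translates of `S ⊆ Q` along `T` partition `Q` and
`∅ ≠ S ≠ Q`, then `φ⁻¹' S` is a Bernstein set whose translates along a section of `φ` over `T`
partition `P`. For `κ = n` finite take `Q = ℚ`, `S = {q | ⌊q⌋ ≡ 0 mod n}` and `T = {0, …, n - 1}`; for
infinite `κ` take `#Q = κ`, `S = {0}` and `T = Q`.
-/

open Cardinal Set Function Submodule

universe u v

theorem linearIndependent_of_notMem_span_image_Iio {K V ι : Type*} [DivisionRing K]
    [AddCommGroup V] [Module K V] [LinearOrder ι] {v : ι → V}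
    (hv : ∀ i, v i ∉ span K (v '' Iio i)) : LinearIndependent K v := by
  classical
  rw [← linearIndepOn_univ_iff, linearIndepOn_iff_linearIndepOn_finset]
  rintro s -
  induction s using Finset.induction_on_max with
  | empty => simp
  | insert a s has ih =>
    rw [Finset.coe_insert, linearIndepOn_insert fun ha => (has a ha).false]
    exact ⟨ih, fun ha => hv a (span_mono (image_mono fun x hx => has x hx) ha)⟩

theorem LinearIndependent.exists_linearMap_eq {K V W ι : Type*} [DivisionRing K]
    [AddCommGroup V] [Module K V] [AddCommGroup W] [Module K W] {v : ι → V}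
    (hv : LinearIndependent K v) (w : ι → W) : ∃ f : V →ₗ[K] W, ∀ i, f (v i) = w i := by
  obtain ⟨f, hf⟩ := LinearMap.exists_extend (Finsupp.linearCombination K w ∘ₗ hv.repr)
  refine ⟨f, fun i => ?_⟩
  have := congr($hf ⟨v i, subset_span (mem_range_self i)⟩)
  simpa [hv.repr_eq_single i ⟨v i, _⟩ rfl] using this

theorem mk_span_rat_le {V : Type u} [AddCommGroup V] [Module ℚ V] (s : Set V) :
    #(span ℚ s) ≤ max #s ℵ₀ := by
  rw [Finsupp.span_eq_range_linearCombination]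
  refine (mk_le_of_surjective (LinearMap.surjective_rangeRestrict _)).trans ?_
  rcases isEmpty_or_nonempty s with hs | hs <;> simp

theorem exists_linearIndependent_forall_mem {J : Type u} {V : Type v} [AddCommGroup V]
    [Module ℚ V] (A : J → Set V) (hJ : ∀ j, lift.{v} #J ≤ lift.{u} #(A j))
    (hA : ∀ j, ℵ₀ < #(A j)) : ∃ x : J → V, LinearIndependent ℚ x ∧ ∀ j, x j ∈ A j := by
  -- In the initial well-order on `J`, every initial segment is smaller than every `A j`.
  obtain ⟨e⟩ : Nonempty ((#J).ord.ToType ≃ J) := Cardinal.eq.1 (mk_ord_toType _)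
  have hfresh : ∀ i (s : Set V), lift.{u} #s ≤ lift.{v} #(Iio i) →
      ∃ y ∈ A (e i), y ∉ span ℚ s := by
    intro i s hs
    have hsA : lift.{u} #s < lift.{u} #(A (e i)) := by
      refine hs.trans_lt ((lift_lt.2 (mk_Iio_lt i (by simp))).trans_le ?_)
      simpa using hJ (e i)
    by_contra! hsub
    exact (mk_le_mk_of_subset hsub).not_gt
      ((mk_span_rat_le s).trans_lt (max_lt (lift_lt.1 hsA) (hA _)))
  choose pick hpickA hpick using hfresh
  let F i (ih : ∀ k < i, V) := pick i (range fun k : Iio i => ih k k.2) mk_range_le_lift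
  obtain ⟨x, hxF⟩ : ∃ x : _ → V, ∀ i, x i = F i fun k _ => x k :=
    ⟨_, wellFounded_lt.fix_eq F⟩
  have hx i : x i ∈ A (e i) ∧ x i ∉ span ℚ (x '' Iio i) := by
    rw [image_eq_range, hxF i]
    exact ⟨hpickA .., hpick _ _ _⟩
  refine ⟨x ∘ e.symm, ?_, fun j => by simpa using (hx (e.symm j)).1⟩
  exact (linearIndependent_of_notMem_span_image_Iio fun i => (hx i).2).comp _ e.symm.injective

theorem exists_linearMap_surjOn_of_continuum_le {V : Type u} [AddCommGroup V] [Module ℚ V]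
    {Q : Type v} [AddCommGroup Q] [Module ℚ Q] (hQ : #Q ≤ 𝔠) (𝒜 : Set (Set V))
    (h𝒜 : #𝒜 ≤ 𝔠) (hA : ∀ A ∈ 𝒜, 𝔠 ≤ #A) :
    ∃ φ : V →ₗ[ℚ] Q, ∀ A ∈ 𝒜, SurjOn φ A Set.univ := by
  have hJ : #(𝒜 × Q) ≤ 𝔠 :=
    calc #(𝒜 × Q) = lift.{v} #𝒜 * lift.{u} #Q := mk_prod _ _
      _ ≤ 𝔠 * 𝔠 := mul_le_mul' (lift_le_continuum.2 h𝒜) (lift_le_continuum.2 hQ)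
      _ = 𝔠 := continuum_mul_self
  obtain ⟨x, hx, hxA⟩ := exists_linearIndependent_forall_mem (fun j : 𝒜 × Q => (j.1 : Set V))
    (fun j => (lift_le_continuum.2 hJ).trans (continuum_le_lift.2 (hA _ j.1.2)))
    fun j => aleph0_lt_continuum.trans_le (hA _ j.1.2)
  obtain ⟨φ, hφ⟩ := hx.exists_linearMap_eq Prod.snd
  exact ⟨φ, fun A hA q _ => ⟨x (⟨A, hA⟩, q), hxA (⟨A, hA⟩, q), hφ _⟩⟩

theorem mk_setOf_isClosed_le_continuum (X : Type u) [TopologicalSpace X]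
    [SecondCountableTopology X] : #{C : Set X | IsClosed C} ≤ 𝔠 := by
  obtain ⟨b, hbc, -, hb⟩ := TopologicalSpace.exists_countable_basis X
  have hinj : Injective fun C : {C : Set X | IsClosed C} =>
      {s : b | (s : Set X) ⊆ (C : Set X)ᶜ} := by
    rintro ⟨C, hC⟩ ⟨D, hD⟩ h
    have hbasic : {s ∈ b | s ⊆ Cᶜ} = {s ∈ b | s ⊆ Dᶜ} :=
      Set.ext fun s => and_congr_right fun hs => Set.ext_iff.1 h ⟨s, hs⟩
    refine Subtype.ext (compl_inj_iff.1 ?_)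
    rw [hb.open_eq_sUnion' hC.isOpen_compl, hb.open_eq_sUnion' hD.isOpen_compl, hbasic]
  calc #{C : Set X | IsClosed C} ≤ #(Set b) := mk_le_of_injective hinj
    _ = 2 ^ #b := mk_set
    _ ≤ 2 ^ ℵ₀ := power_le_power_left two_ne_zero (mk_le_aleph0_iff.2 hbc.to_subtype)
    _ = 𝔠 := two_power_aleph0

theorem Perfect.continuum_le_mk {X : Type u} [MetricSpace X] [CompleteSpace X] {C : Set X}
    (hC : Perfect C) (hne : C.Nonempty) : 𝔠 ≤ #C := by
  obtain ⟨f, hfC, -, hf⟩ := hC.exists_nat_bool_injection hne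
  simpa using lift_mk_le_lift_mk_of_injective (hf.codRestrict (range_subset_iff.1 hfC))

theorem exists_addMonoidHom_surjective_surjOn_of_isCantorSet (P : Type u)
    [NormedAddCommGroup P] [NormedSpace ℝ P] [CompleteSpace P]
    [TopologicalSpace.SeparableSpace P] [Nontrivial P]
    {Q : Type v} [AddCommGroup Q] [Module ℚ Q] (hQ : #Q ≤ 𝔠) :
    ∃ φ : P →+ Q, Surjective φ ∧ ∀ C, IsCantorSet C → SurjOn φ C Set.univ := by
  let _ : Module ℚ P := Module.compHom P (algebraMap ℚ ℝ)
  have := UniformSpace.secondCountable_of_separable P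
  obtain ⟨φ, hφ⟩ := exists_linearMap_surjOn_of_continuum_le hQ {C : Set P | IsClosed C ∧ 𝔠 ≤ #C}
    ((mk_le_mk_of_subset fun C hC => hC.1).trans (mk_setOf_isClosed_le_continuum P))
    fun C hC => hC.2
  refine ⟨φ.toAddMonoidHom, fun q => ?_, fun C hC => hφ C ?_⟩
  · obtain ⟨x, -, hx⟩ := hφ Set.univ
      ⟨isClosed_univ, by simpa using continuum_le_cardinal_of_module ℝ P⟩ (Set.mem_univ q)
    exact ⟨x, hx⟩
  · exact ⟨hC.2.2.2.closed, hC.2.2.2.continuum_le_mk hC.1⟩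

theorem isBernstein_preimage_of_surjOn {X Y : Type*} [TopologicalSpace X] {f : X → Y}
    (hf : ∀ C, IsCantorSet C → SurjOn f C Set.univ) {S : Set Y} (hS : S.Nonempty)
    (hS' : Sᶜ.Nonempty) : IsBernstein (f ⁻¹' S) := by
  intro C hC
  obtain ⟨s, hs⟩ := hS
  obtain ⟨s', hs'⟩ := hS'
  obtain ⟨x, hxC, rfl⟩ := hf C hC (Set.mem_univ s)
  obtain ⟨y, hyC, rfl⟩ := hf C hC (Set.mem_univ s')
  exact ⟨fun h => hs' (h hyC), fun h => h hxC hs⟩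

theorem mem_image_add_left_iff_sub_mem {G : Type*} [AddCommGroup G] {S : Set G} {a z : G} :
    z ∈ (fun x => a + x) '' S ↔ z - a ∈ S := by
  simp [image_add_left, neg_add_eq_sub]

def IsTranslatePartition {G ι : Type*} [AddCommGroup G] (S : Set G) (t : ι → G) : Prop :=
  ∀ g, ∃! i, g - t i ∈ S

namespace IsTranslatePartition

variable {G H ι : Type*} [AddCommGroup G] [AddCommGroup H] {S : Set G} {t : ι → G}

theorem nonempty (h : IsTranslatePartition S t) : S.Nonempty :=
  let ⟨_, hi, _⟩ := h 0
  ⟨_, hi⟩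

theorem nonempty_compl [Nontrivial ι] (h : IsTranslatePartition S t) : Sᶜ.Nonempty := by
  by_contra! hS
  rw [compl_empty_iff] at hS
  obtain ⟨i, j, hij⟩ := exists_pair_ne ι
  exact hij ((h 0).unique (by simp [hS]) (by simp [hS]))

theorem injective (h : IsTranslatePartition S t) : Injective t := by
  obtain ⟨s, hs⟩ := h.nonempty
  intro i j hij
  exact (h (t i + s)).unique (by simpa using hs) (by simpa [hij] using hs)

theorem preimage (h : IsTranslatePartition S t) (f : H →+ G) {σ : G → H}
    (hσ : RightInverse σ f) : IsTranslatePartition (f ⁻¹' S) (σ ∘ t) := fun g => by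
  simpa [hσ _] using h (f g)

theorem pairwiseDisjoint (h : IsTranslatePartition S t) :
    (range t).PairwiseDisjoint fun a => (fun x => a + x) '' S := by
  rintro _ ⟨i, rfl⟩ _ ⟨j, rfl⟩ hne
  refine disjoint_left.2 fun z hzi hzj => hne (congrArg t ((h z).unique ?_ ?_)) <;>
    rwa [← mem_image_add_left_iff_sub_mem]

theorem iUnion_eq_univ (h : IsTranslatePartition S t) :
    ⋃ a ∈ range t, (fun x => a + x) '' S = Set.univ := by
  refine eq_univ_of_forall fun z => mem_iUnion₂.2 ?_
  obtain ⟨i, hi, -⟩ := h z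
  exact ⟨t i, mem_range_self i, mem_image_add_left_iff_sub_mem.2 hi⟩

end IsTranslatePartition

theorem isTranslatePartition_floor_zmod (n : ℕ) [NeZero n] :
    IsTranslatePartition {q : ℚ | (⌊q⌋ : ZMod n) = 0} fun k : ZMod n => (k.val : ℚ) := by
  have hmem (q : ℚ) (k : ZMod n) : q - k.val ∈ {q : ℚ | (⌊q⌋ : ZMod n) = 0} ↔ k = ⌊q⌋ := by
    simp only [mem_ofPred_eq, Int.floor_sub_natCast, Int.cast_sub, Int.cast_natCast,
      ZMod.natCast_zmod_val, sub_eq_zero, eq_comm]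
  exact fun q => ⟨⌊q⌋, (hmem q _).2 rfl, fun k hk => (hmem q k).1 hk⟩

theorem isTranslatePartition_singleton_zero_id {G : Type*} [AddCommGroup G] :
    IsTranslatePartition {(0 : G)} id :=
  fun g => ⟨g, by simp, fun i hi => (sub_eq_zero.1 hi).symm⟩

theorem exists_isBernstein_isTranslatePartition (P : Type u) [NormedAddCommGroup P]
    [NormedSpace ℝ P] [CompleteSpace P] [TopologicalSpace.SeparableSpace P] [Nontrivial P]
    {Q : Type v} [AddCommGroup Q] [Module ℚ Q] (hQ : #Q ≤ 𝔠) {ι : Type*} [Nontrivial ι]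
    {S : Set Q} {t : ι → Q} (h : IsTranslatePartition S t) :
    ∃ (B : Set P) (t' : ι → P), IsBernstein B ∧ IsTranslatePartition B t' := by
  obtain ⟨φ, hφ, hC⟩ := exists_addMonoidHom_surjective_surjOn_of_isCantorSet P hQ
  exact ⟨φ ⁻¹' S, surjInv hφ ∘ t, isBernstein_preimage_of_surjOn hC h.nonempty h.nonempty_compl,
    h.preimage φ (rightInverse_surjInv hφ)⟩

theorem banach_partition_into_translates_of_bernstein_set
    (P : Type*) [NormedAddCommGroup P] [NormedSpace ℝ P] [CompleteSpace P]
    [TopologicalSpace.SeparableSpace P] [Nontrivial P]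
    (κ : Cardinal) (h2 : 2 ≤ κ) (hc : κ ≤ Cardinal.continuum) :
    ∃ (B : Set P) (T : Set P), IsBernstein B ∧ Cardinal.mk T = κ ∧
      T.PairwiseDisjoint (fun t => (fun x => t + x) '' B) ∧
      (⋃ t ∈ T, (fun x => t + x) '' B) = Set.univ := by
  rcases lt_or_ge κ ℵ₀ with hfin | hinf
  · obtain ⟨n, rfl⟩ := lt_aleph0.1 hfin
    have : Fact (1 < n) := ⟨by exact_mod_cast h2⟩
    obtain ⟨B, t, hB, ht⟩ := exists_isBernstein_isTranslatePartition P
      (mkRat.trans_le aleph0_le_continuum) (isTranslatePartition_floor_zmod n)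
    refine ⟨B, range t, hB, ?_, ht.pairwiseDisjoint, ht.iUnion_eq_univ⟩
    simpa using mk_range_eq_of_injective ht.injective
  · have : Infinite κ.out := infinite_iff.2 (by rwa [mk_out])
    have hQ : #(κ.out →₀ ℚ) = κ := by simpa using hinf
    obtain ⟨B, t, hB, ht⟩ := exists_isBernstein_isTranslatePartition P (hQ.trans_le hc)
      (isTranslatePartition_singleton_zero_id (G := κ.out →₀ ℚ))
    refine ⟨B, range t, hB, ?_, ht.pairwiseDisjoint, ht.iUnion_eq_univ⟩
    rw [mk_range_eq _ ht.injective, hQ]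
end

section
/- If P is an uncountable Polish space and 2 ≤ κ ≤ 2^ℵ₀ is a cardinal, then P can be partitioned into exactly κ Bernstein sets B such that no member B of the partition is homeomorphic to a subspace of P \ B. -/
/-!
Colour the points of `P` with `κ` colours by a recursion of length `𝔠` in which every stage
colours at most two points that were not coloured before; fewer than `𝔠` points are coloured
before any stage. There are only `𝔠` Cantor sets, each of size `𝔠`, so one stage per Cantor set
and colour puts a point of every colour into every Cantor set, and the colour classes are
Bernstein sets.

A continuous map `f` on a colour class `B` is determined by the pairs `(d n, f (d n))` for a
dense sequence `d` of `B`: `f x` is the limit of `f (d n)` as `d n → x`. This limit, taken over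
all of `P`, extends `f` to a map `G`, and the `𝔠` possible codes can be enumerated in advance. If
`f` is injective and `B` has `𝔠` points, the stage for the code of `f` and the colour of `B` finds
a fresh `x` with `G x` fresh and gives both the colour of `B`; then `f x = G x ∈ B`, so `f` does
not map `B` into its complement.
-/

open Cardinal Set Filter Topology Function TopologicalSpace

universe u

section Cardinality

theorem mk_nat_arrow_le_continuum {α : Type u} (h : #α ≤ 𝔠) : #(ℕ → α) ≤ 𝔠 := by
  rw [mk_arrow, mk_nat, lift_aleph0, lift_uzero]
  exact (power_le_power_right h).trans_eq continuum_power_aleph0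

theorem mk_prod_le_continuum {α β : Type u} (ha : #α ≤ 𝔠) (hb : #β ≤ 𝔠) : #(α × β) ≤ 𝔠 := by
  rw [mk_prod, lift_id, lift_id]
  exact (mul_le_mul' ha hb).trans_eq continuum_mul_self

theorem mk_sum_le_continuum {α β : Type u} (ha : #α ≤ 𝔠) (hb : #β ≤ 𝔠) : #(α ⊕ β) ≤ 𝔠 := by
  rw [mk_sum, lift_id, lift_id]
  exact (add_le_add ha hb).trans_eq continuum_add_self

theorem exists_mem_notMem_of_mk_lt {α : Type u} {S A : Set α} (h : #A < #S) : ∃ x ∈ S, x ∉ A :=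
  not_subset.1 fun hSA => (mk_le_mk_of_subset hSA).not_gt h

theorem exists_mem_notMem_and_apply_notMem_of_injOn {α : Type u} {B A : Set α} {g : α → α}
    (hB : ℵ₀ ≤ #B) (hA : #A < #B) (hg : InjOn g B) : ∃ x ∈ B, x ∉ A ∧ g x ∉ A := by
  by_contra! h
  have hcover : B ⊆ A ∪ (B ∩ g ⁻¹' A) := fun x hx =>
    or_iff_not_imp_left.2 fun hxA => ⟨hx, h x hx hxA⟩
  have hpreimage : #(B ∩ g ⁻¹' A : Set α) ≤ #A := by
    rw [← mk_image_eq_of_injOn g _ (hg.mono inter_subset_left)]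
    exact mk_le_mk_of_subset (image_subset_iff.2 fun x hx => hx.2)
  have : #B < #B :=
    calc #B ≤ #A + #(B ∩ g ⁻¹' A : Set α) := (mk_le_mk_of_subset hcover).trans (mk_union_le _ _)
      _ ≤ #A + #A := add_le_add le_rfl hpreimage
      _ < #B := add_lt_of_lt hB hA hA
  exact this.false

end Cardinality

section Fibers

variable {α β : Type u} (c : α → β)

theorem Function.Surjective.mk_range_preimage_singleton (hc : Surjective c) :
    #(range fun b => c ⁻¹' {b}) = #β :=
  mk_range_eq _ (hc.preimage_injective.comp singleton_injective)

theorem pairwiseDisjoint_range_preimage_singleton :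
    (range fun b => c ⁻¹' {b}).PairwiseDisjoint id := by
  rintro _ ⟨a, rfl⟩ _ ⟨b, rfl⟩ hab
  exact (disjoint_singleton.2 (ne_of_apply_ne (c ⁻¹' {·}) hab)).preimage c

theorem sUnion_range_preimage_singleton : ⋃₀ range (fun b => c ⁻¹' {b}) = Set.univ := by
  rw [sUnion_range, ← preimage_iUnion, iUnion_of_singleton, preimage_univ]

end Fibers

section PolishSpace

variable {P : Type u} [TopologicalSpace P]

theorem PolishSpace.mk_eq_continuum [PolishSpace P] [Uncountable P] : #P = 𝔠 := by
  let := borel P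
  have : BorelSpace P := ⟨rfl⟩
  have e := (PolishSpace.measurableEquivNatBoolOfNotCountable (α := P) not_countable).toEquiv
  simpa using Cardinal.lift_mk_eq'.2 ⟨e⟩

theorem IsCantorSet.continuum_le_mk [PolishSpace P] {C : Set P} (hC : IsCantorSet C) :
    𝔠 ≤ #C := by
  let := upgradeIsCompletelyMetrizable P
  obtain ⟨f, hfC, -, hf⟩ := hC.2.2.2.exists_nat_bool_injection hC.1
  simpa using Cardinal.lift_mk_le'.2 ⟨⟨codRestrict f C fun x => hfC ⟨x, rfl⟩,
    (injective_codRestrict _).2 hf⟩⟩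

theorem IsClosed.exists_closure_range_eq [SecondCountableTopology P] {C : Set P}
    (hC : IsClosed C) (hne : C.Nonempty) : ∃ u : ℕ → P, closure (range u) = C := by
  have := hne.to_subtype
  refine ⟨(↑) ∘ denseSeq C, (closure_minimal ?_ hC).antisymm ?_⟩
  · exact range_subset_iff.2 fun n => (denseSeq C n).2
  · rw [range_comp]
    exact Subtype.dense_iff.1 (denseRange_denseSeq C)

theorem mk_isCantorSet_le [SecondCountableTopology P] (hP : #P ≤ 𝔠) :
    #{C : Set P // IsCantorSet C} ≤ 𝔠 := by
  choose u hu using fun C : {C : Set P // IsCantorSet C} =>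
    IsClosed.exists_closure_range_eq C.2.2.2.2.1 C.2.1
  have hu_inj : Injective u := fun C D h => Subtype.ext <| by rw [← hu C, ← hu D, h]
  exact (mk_le_of_injective hu_inj).trans (mk_nat_arrow_le_continuum hP)

end PolishSpace

section CodeExtension

variable {P : Type u} [TopologicalSpace P] [Nonempty P]

noncomputable def codeExtension (v : ℕ → P × P) (x : P) : P :=
  limUnder (comap (fun n => (v n).1) (𝓝 x)) fun n => (v n).2

theorem codeExtension_eq [T2Space P] {B : Set P} {f : B → P} (hf : Continuous f) {d : ℕ → B}
    (hd : DenseRange d) (b : B) : codeExtension (fun n => ((d n : P), f (d n))) b = f b := by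
  have hcomap : comap (fun n => (d n : P)) (𝓝 (b : P)) = comap d (𝓝 b) := by
    rw [nhds_subtype, comap_comap]; rfl
  have : (comap d (𝓝 b)).NeBot := comap_neBot fun t ht => by
    obtain ⟨_, ⟨n, rfl⟩, hbt⟩ := hd.inter_nhds_nonempty ht
    exact ⟨n, hbt⟩
  unfold codeExtension
  rw [hcomap]
  exact ((hf.tendsto b).comp tendsto_comap).limUnder_eq

end CodeExtension

section Greedy

variable {ι P K : Type u} [LinearOrder ι] [WellFoundedLT ι] (pick : ι → Set P → Set P)

noncomputable def greedyStage : ι → Set P :=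
  wellFounded_lt.fix fun o stage => pick o (⋃ q : Iio o, stage q q.2)

def greedyUsed (o : ι) : Set P := ⋃ q : Iio o, greedyStage pick q

theorem greedyStage_eq (o : ι) : greedyStage pick o = pick o (greedyUsed pick o) :=
  wellFounded_lt.fix_eq _ _

variable {pick}

theorem mk_greedyUsed_lt (hι : ∀ o : ι, #(Iio o) < 𝔠) (hpick : ∀ o A, (pick o A).Finite)
    (o : ι) : #(greedyUsed pick o) < 𝔠 := by
  have hstage : (⨆ q : Iio o, #(greedyStage pick q)) < 𝔠 := by
    refine (ciSup_le' fun q => ?_).trans_lt aleph0_lt_continuum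
    rw [greedyStage_eq]
    exact (hpick _ _).lt_aleph0.le
  exact (mk_iUnion_le _).trans_lt (mul_lt_of_lt aleph0_le_continuum (hι o) hstage)

theorem pairwise_disjoint_greedyStage (hpick : ∀ o A, Disjoint (pick o A) A) :
    Pairwise (Disjoint on greedyStage pick) := by
  refine (pairwise_disjoint_on _).2 fun o₁ o₂ h => disjoint_left.2 fun x h₁ h₂ => ?_
  rw [greedyStage_eq] at h₂
  exact disjoint_left.1 (hpick _ _) h₂ (mem_iUnion.2 ⟨⟨o₁, h⟩, h₁⟩)

theorem eq_of_mem_greedyStage (hpick : ∀ o A, Disjoint (pick o A) A) {o₁ o₂ : ι} {x : P}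
    (h₁ : x ∈ greedyStage pick o₁) (h₂ : x ∈ greedyStage pick o₂) : o₁ = o₂ := by
  by_contra hne
  exact disjoint_left.1 (pairwise_disjoint_greedyStage hpick hne) h₁ h₂

open Classical in
noncomputable def greedyColor (pick : ι → Set P → Set P) (color : ι → K) (k₀ : K) (x : P) : K :=
  if h : ∃ o, x ∈ greedyStage pick o then color h.choose else k₀

theorem greedyColor_eq (hpick : ∀ o A, Disjoint (pick o A) A) {color : ι → K} {k₀ : K} {o : ι}
    {x : P} (hx : x ∈ greedyStage pick o) : greedyColor pick color k₀ x = color o := by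
  have h : ∃ o, x ∈ greedyStage pick o := ⟨o, hx⟩
  rw [greedyColor, dif_pos h, eq_of_mem_greedyStage hpick h.choose_spec hx]

end Greedy

section PairPick

variable {P : Type u}

open Classical in
noncomputable def pairPick (R : Set (P × P)) (A : Set P) : Set P :=
  if h : ∃ z ∈ R, z.1 ∉ A ∧ z.2 ∉ A then {h.choose.1, h.choose.2} else ∅

theorem pairPick_finite (R : Set (P × P)) (A : Set P) : (pairPick R A).Finite := by
  unfold pairPick; split <;> simp

theorem disjoint_pairPick (R : Set (P × P)) (A : Set P) : Disjoint (pairPick R A) A := by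
  unfold pairPick
  split
  · next h => simpa using ⟨h.choose_spec.2.1, h.choose_spec.2.2⟩
  · exact empty_disjoint _

theorem exists_mem_pairPick {R : Set (P × P)} {A : Set P} (h : ∃ z ∈ R, z.1 ∉ A ∧ z.2 ∉ A) :
    ∃ z ∈ R, z.1 ∈ pairPick R A ∧ z.2 ∈ pairPick R A := by
  refine ⟨h.choose, h.choose_spec.1, ?_⟩
  simp [pairPick, dif_pos h]

end PairPick

section Coloring

variable {ι P K J : Type u} [LinearOrder ι] [WellFoundedLT ι]

theorem exists_mem_greedyStage_pairPick (hι : ∀ o : ι, #(Iio o) < 𝔠) {rel : ι → Set (P × P)}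
    {o : ι} (h : ∀ A : Set P, #A < 𝔠 → ∃ z ∈ rel o, z.1 ∉ A ∧ z.2 ∉ A) :
    ∃ z ∈ rel o, z.1 ∈ greedyStage (fun o => pairPick (rel o)) o ∧
      z.2 ∈ greedyStage (fun o => pairPick (rel o)) o := by
  rw [greedyStage_eq]
  exact exists_mem_pairPick (h _ (mk_greedyUsed_lt hι (fun o => pairPick_finite (rel o)) o))

theorem exists_coloring [Nonempty K] (hP : #P = 𝔠) (hJ : #J ≤ 𝔠) (hK : #K ≤ 𝔠)
    (R : J → Set (P × P)) :
    ∃ c : P → K, (∀ k, 𝔠 ≤ #(c ⁻¹' {k})) ∧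
      ∀ j k, (∀ A : Set P, #A < 𝔠 → ∃ z ∈ R j, z.1 ∉ A ∧ z.2 ∉ A) →
        ∃ z ∈ R j, c z.1 = k ∧ c z.2 = k := by
  obtain ⟨task⟩ : Nonempty ((J ⊕ P) × K ↪ (𝔠 : Cardinal.{u}).ord.ToType) := by
    rw [← Cardinal.le_def]
    simpa using mk_prod_le_continuum (mk_sum_le_continuum hJ hP.le) hK
  have hι (o : (𝔠 : Cardinal.{u}).ord.ToType) : #(Iio o) < 𝔠 := by simpa using mk_Iio_lt o
  have : Nonempty P := by rw [← mk_ne_zero_iff, hP]; exact continuum_ne_zero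
  let e := invFun task
  have he : ∀ t, e (task t) = t := leftInverse_invFun task.injective
  -- the tasks `(Sum.inr p, k)` only serve to make every colour class of size `𝔠`
  let rel (o : (𝔠 : Cardinal.{u}).ord.ToType) : Set (P × P) := Sum.elim R (fun _ => univ) (e o).1
  let stage := greedyStage fun o => pairPick (rel o)
  have hdisj (o) (A) : Disjoint (pairPick (rel o) A) A := disjoint_pairPick _ _
  let c := greedyColor (fun o => pairPick (rel o)) (fun o => (e o).2) (Classical.arbitrary K)
  have hc {t x} (hx : x ∈ stage (task t)) : c x = t.2 :=
    (greedyColor_eq hdisj hx).trans (congrArg Prod.snd (he t))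
  refine ⟨c, fun k => ?_, fun j k hj => ?_⟩
  · have hstage (p : P) : ∃ x, x ∈ stage (task (Sum.inr p, k)) := by
      have hfresh (A : Set P) (hA : #A < 𝔠) :
          ∃ z ∈ rel (task (Sum.inr p, k)), z.1 ∉ A ∧ z.2 ∉ A := by
        obtain ⟨x, -, hx⟩ := exists_mem_notMem_of_mk_lt (S := univ) (A := A)
          (by rwa [mk_univ, hP])
        exact ⟨(x, x), by simp [rel, he], hx, hx⟩
      obtain ⟨z, -, hz, -⟩ := exists_mem_greedyStage_pairPick hι hfresh
      exact ⟨z.1, hz⟩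
    choose ψ hψ using hstage
    have hψ_inj : Injective fun p => (⟨ψ p, hc (hψ p)⟩ : ↥(c ⁻¹' {k})) := fun p q hpq => by
      have hpq' : ψ p = ψ q := congrArg Subtype.val hpq
      have := eq_of_mem_greedyStage hdisj (hψ p) (hpq' ▸ hψ q)
      simpa using task.injective this
    exact hP ▸ mk_le_of_injective hψ_inj
  · obtain ⟨z, hz, h₁, h₂⟩ := exists_mem_greedyStage_pairPick hι (rel := rel)
      (o := task (Sum.inl j, k)) (by simpa [rel, he] using hj)
    exact ⟨z, by simpa [rel, he] using hz, hc h₁, hc h₂⟩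

end Coloring

section Rigidity

variable {P : Type u} [TopologicalSpace P]

theorem isBernstein_preimage_singleton {K : Type*} [Nontrivial K] {c : P → K}
    (hc : ∀ C, IsCantorSet C → ∀ k, ∃ x ∈ C, c x = k) (k : K) : IsBernstein (c ⁻¹' {k}) := by
  refine fun C hC => ⟨fun hsub => ?_, fun hsub => ?_⟩
  · obtain ⟨k', hk'⟩ := exists_ne k
    obtain ⟨x, hxC, hx⟩ := hc C hC k'
    exact hk' (hx.symm.trans (hsub hxC))
  · obtain ⟨x, hxC, hx⟩ := hc C hC k
    exact hsub hxC hx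

variable [T2Space P] [SecondCountableTopology P] [Nonempty P]

theorem exists_apply_mem_of_continuous_of_injective {B : Set P} (hB : 𝔠 ≤ #B)
    (hcode : ∀ v : ℕ → P × P, (∀ A : Set P, #A < 𝔠 → ∃ x, x ∉ A ∧ codeExtension v x ∉ A) →
      ∃ x ∈ B, codeExtension v x ∈ B)
    {f : B → P} (hf : Continuous f) (hinj : Injective f) : ∃ b, f b ∈ B := by
  have : Nonempty B := by rw [← mk_ne_zero_iff]; exact (continuum_pos.trans_le hB).ne'
  let d := denseSeq B
  have hext : ∀ b : B, codeExtension (fun n => ((d n : P), f (d n))) b = f b :=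
    codeExtension_eq hf (denseRange_denseSeq B)
  have hinjOn : InjOn (codeExtension fun n => ((d n : P), f (d n))) B := fun x hx y hy hxy => by
    rw [hext ⟨x, hx⟩, hext ⟨y, hy⟩] at hxy
    exact congrArg Subtype.val (hinj hxy)
  obtain ⟨x, hx, hfx⟩ := hcode _ fun A hA => by
    obtain ⟨x, -, hxA, hgxA⟩ := exists_mem_notMem_and_apply_notMem_of_injOn
      (aleph0_le_continuum.trans hB) (hA.trans_le hB) hinjOn
    exact ⟨x, hxA, hgxA⟩
  exact ⟨⟨x, hx⟩, hext ⟨x, hx⟩ ▸ hfx⟩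

theorem isEmpty_homeomorph_of_subset_compl {B : Set P} (hB : 𝔠 ≤ #B)
    (hcode : ∀ v : ℕ → P × P, (∀ A : Set P, #A < 𝔠 → ∃ x, x ∉ A ∧ codeExtension v x ∉ A) →
      ∃ x ∈ B, codeExtension v x ∈ B)
    {S : Set P} (hS : S ⊆ Bᶜ) : IsEmpty (B ≃ₜ S) := by
  refine ⟨fun φ => ?_⟩
  obtain ⟨b, hb⟩ := exists_apply_mem_of_continuous_of_injective hB hcode (f := fun b => (φ b : P))
    (by fun_prop) (Subtype.val_injective.comp φ.injective)
  exact hS (φ b).2 hb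

end Rigidity

theorem polish_partition_into_kappa_rigid_bernstein_sets
    (P : Type*) [TopologicalSpace P] [PolishSpace P] [Uncountable P]
    (κ : Cardinal) (h2 : 2 ≤ κ) (hc : κ ≤ Cardinal.continuum) :
    ∃ Part : Set (Set P), Cardinal.mk Part = κ ∧ Part.PairwiseDisjoint id ∧
      ⋃₀ Part = Set.univ ∧
      ∀ B ∈ Part, IsBernstein B ∧ ∀ S : Set P, S ⊆ Bᶜ → IsEmpty (↥B ≃ₜ ↥S) := by
  obtain ⟨K, rfl⟩ : ∃ K : Type _, #K = κ := ⟨κ.out, mk_out κ⟩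
  have : Nontrivial K := one_lt_iff_nontrivial.1 (Cardinal.one_lt_two.trans_le h2)
  have hP : #P = 𝔠 := PolishSpace.mk_eq_continuum
  let R : {C : Set P // IsCantorSet C} ⊕ (ℕ → P × P) → Set (P × P) :=
    Sum.elim (fun C => C.1 ×ˢ C.1) fun v => range fun x => (x, codeExtension v x)
  obtain ⟨c, hcard, hR⟩ := exists_coloring hP
    (mk_sum_le_continuum (mk_isCantorSet_le hP.le) (mk_nat_arrow_le_continuum (by simp [hP]))) hc R
  have hcantor (C : Set P) (hC : IsCantorSet C) (k : K) : ∃ x ∈ C, c x = k := by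
    obtain ⟨z, hz, hz1, -⟩ := hR (Sum.inl ⟨C, hC⟩) k fun A hA =>
      let ⟨x, hxC, hxA⟩ := exists_mem_notMem_of_mk_lt (hA.trans_le hC.continuum_le_mk)
      ⟨(x, x), ⟨hxC, hxC⟩, hxA, hxA⟩
    exact ⟨z.1, hz.1, hz1⟩
  have hcode (v : ℕ → P × P) (k : K)
      (hv : ∀ A : Set P, #A < 𝔠 → ∃ x, x ∉ A ∧ codeExtension v x ∉ A) :
      ∃ x ∈ c ⁻¹' {k}, codeExtension v x ∈ c ⁻¹' {k} := by
    simpa [R] using hR (Sum.inr v) k (by simpa [R] using hv)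
  have hsurj : Surjective c := fun k => by
    obtain ⟨⟨x, hx⟩⟩ := mk_ne_zero_iff.1 (continuum_pos.trans_le (hcard k)).ne'
    exact ⟨x, hx⟩
  refine ⟨range fun k => c ⁻¹' {k}, hsurj.mk_range_preimage_singleton,
    pairwiseDisjoint_range_preimage_singleton c, sUnion_range_preimage_singleton c, ?_⟩
  rintro _ ⟨k, rfl⟩
  exact ⟨isBernstein_preimage_singleton hcantor k,
    fun S hS => isEmpty_homeomorph_of_subset_compl (hcard k) (hcode · k) hS⟩
end
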